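/- arXiv:2409.10187 — 13 statements merged into one kernel-verified Lean document; each statement's English description precedes it below -/
import Mathlib

section
/- y_1^- z^+ y_2^- is a *-identity of M_{1,2}(F): for all a, c ∈ A_0^- and every b ∈ A_1^+, one has a·b·c = 0. -/
open Matrix

variable (F : Type*) [Field F] [CharZero F]

/-- The orthosymplectic superinvolution on `M_3(F)`:
`[[a,b,c],[d,e,f],[g,h,i]] ↦ [[a,-g,d],[c,i,-f],[-b,-h,e]]`. -/
def osp (X : Matrix (Fin 3) (Fin 3) F) : Matrix (Fin 3) (Fin 3) F :=
  !![X 0 0, -X 2 0, X 1 0;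
     X 0 2, X 2 2, -X 1 2;
     -X 0 1, -X 2 1, X 1 1]

/-- The even part of the grading `M_{1,2}(F)`: matrices `[[a,0,0],[0,e,f],[0,h,i]]`. -/
def A0 : Set (Matrix (Fin 3) (Fin 3) F) :=
  {X | X 0 1 = 0 ∧ X 0 2 = 0 ∧ X 1 0 = 0 ∧ X 2 0 = 0}

/-- The odd part of the grading `M_{1,2}(F)`: matrices `[[0,b,c],[d,0,0],[g,0,0]]`. -/
def A1 : Set (Matrix (Fin 3) (Fin 3) F) :=
  {X | X 0 0 = 0 ∧ X 1 1 = 0 ∧ X 1 2 = 0 ∧ X 2 1 = 0 ∧ X 2 2 = 0}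

/-- Even symmetric elements. -/
def A0p : Set (Matrix (Fin 3) (Fin 3) F) := {X | X ∈ A0 F ∧ osp F X = X}
/-- Even skew elements. -/
def A0m : Set (Matrix (Fin 3) (Fin 3) F) := {X | X ∈ A0 F ∧ osp F X = -X}
/-- Odd symmetric elements. -/
def A1p : Set (Matrix (Fin 3) (Fin 3) F) := {X | X ∈ A1 F ∧ osp F X = X}
/-- Odd skew elements. -/
def A1m : Set (Matrix (Fin 3) (Fin 3) F) := {X | X ∈ A1 F ∧ osp F X = -X}

/-- `y₁⁻ z⁺ y₂⁻` is a `*`-identity of `M_{1,2}(F)`. -/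
theorem star_identity_skew_oddsym_skew :
    ∀ a ∈ A0m F, ∀ c ∈ A0m F, ∀ b ∈ A1p F, a * b * c = 0 := by
  rintro a ⟨⟨ha01, ha02, ha10, ha20⟩, ha⟩ c ⟨⟨hc01, hc02, hc10, hc20⟩, hc⟩
    b ⟨⟨hb00, hb11, hb12, hb21, hb22⟩, hb⟩
  have ha00 : a 0 0 = 0 := by
    have h := congrFun (congrFun ha 0) 0
    simp [osp] at h
    have h2 : (2:F) * a 0 0 = 0 := by linear_combination h
    simpa using h2
  have hc00 : c 0 0 = 0 := by
    have h := congrFun (congrFun hc 0) 0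
    simp [osp] at h
    have h2 : (2:F) * c 0 0 = 0 := by linear_combination h
    simpa using h2
  ext i j
  fin_cases i <;> fin_cases j <;>
    simp [Matrix.mul_apply, Fin.sum_univ_three, ha00, ha01, ha02, ha10, ha20,
      hc00, hc01, hc02, hb00, hb11, hb12, hb21, hb22]
end

section
/- y_1^- z^- y_2^- is a *-identity of M_{1,2}(F): for all a, c ∈ A_0^- and every b ∈ A_1^-, one has a·b·c = 0. -/
open Matrix

variable (F : Type*) [Field F] [CharZero F]

/-- `y₁⁻ z⁻ y₂⁻` is a `*`-identity of `M_{1,2}(F)`. -/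
theorem star_identity_skew_oddskew_skew :
    ∀ a ∈ A0m F, ∀ c ∈ A0m F, ∀ b ∈ A1m F, a * b * c = 0 := by
  rintro a ⟨⟨ha1, ha2, ha3, ha4⟩, ha5⟩ c ⟨⟨hc1, hc2, hc3, hc4⟩, hc5⟩
    b ⟨⟨hb1, hb2, hb3, hb4, hb5⟩, hb6⟩
  have ha00 : a 0 0 = 0 := by
    have := congrFun (congrFun ha5 0) 0
    simp [osp, Matrix.neg_apply] at this
    exact CharZero.eq_neg_self_iff.mp this
  have hc00 : c 0 0 = 0 := by
    have := congrFun (congrFun hc5 0) 0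
    simp [osp, Matrix.neg_apply] at this
    exact CharZero.eq_neg_self_iff.mp this
  ext i j
  fin_cases i <;> fin_cases j <;>
    simp [Matrix.mul_apply, Fin.sum_univ_three, ha1, ha2, ha3, ha4, hc1, hc2, hc3, hc4,
      hb2, hb3, hb4, hb5, ha00, hc00]
end

section
/- z_1^+ z_2^+ z_3^+ + z_2^+ z_3^+ z_1^+ + z_3^+ z_1^+ z_2^+ is a *-identity of M_{1,2}(F): for all b_1, b_2, b_3 ∈ A_1^+, one has b_1 b_2 b_3 + b_2 b_3 b_1 + b_3 b_1 b_2 = 0. -/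
open Matrix

variable (F : Type*) [Field F] [CharZero F]

private lemma fin3_mk_two (h : (2:ℕ) < 3) : (⟨2, h⟩ : Fin 3) = 2 := rfl

/-- `z₁⁺ z₂⁺ z₃⁺ + z₂⁺ z₃⁺ z₁⁺ + z₃⁺ z₁⁺ z₂⁺` is a `*`-identity of `M_{1,2}(F)`. -/
theorem star_identity_cyclic_oddsym :
    ∀ b₁ ∈ A1p F, ∀ b₂ ∈ A1p F, ∀ b₃ ∈ A1p F,
      b₁ * b₂ * b₃ + b₂ * b₃ * b₁ + b₃ * b₁ * b₂ = 0 := by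
  rintro b₁ ⟨⟨h100,h111,h112,h121,h122⟩,hs1⟩ b₂ ⟨⟨h200,h211,h212,h221,h222⟩,hs2⟩ b₃ ⟨⟨h300,h311,h312,h321,h322⟩,hs3⟩
  have e1a : -b₁ 2 0 = b₁ 0 1 := congrFun (congrFun hs1 0) 1
  have e1b : b₁ 1 0 = b₁ 0 2 := congrFun (congrFun hs1 0) 2
  have e2a : -b₂ 2 0 = b₂ 0 1 := congrFun (congrFun hs2 0) 1
  have e2b : b₂ 1 0 = b₂ 0 2 := congrFun (congrFun hs2 0) 2
  have e3a : -b₃ 2 0 = b₃ 0 1 := congrFun (congrFun hs3 0) 1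
  have e3b : b₃ 1 0 = b₃ 0 2 := congrFun (congrFun hs3 0) 2
  ext i j
  fin_cases i <;> fin_cases j <;>
    simp only [Fin.mk_zero, Fin.mk_one, fin3_mk_two, Matrix.add_apply, Matrix.mul_apply,
      Fin.sum_univ_three, Matrix.zero_apply] <;>
    simp only [h100,h111,h112,h121,h122,h200,h211,h212,h221,h222,h300,h311,h312,h321,h322,
      ← e1a, ← e1b, ← e2a, ← e2b, ← e3a, ← e3b] <;> ring
end

section
/- z_1^- z_2^- z_3^- + z_2^- z_3^- z_1^- + z_3^- z_1^- z_2^- is a *-identity of M_{1,2}(F): for all c_1, c_2, c_3 ∈ A_1^-, one has c_1 c_2 c_3 + c_2 c_3 c_1 + c_3 c_1 c_2 = 0. -/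
open Matrix

variable (F : Type*) [Field F] [CharZero F]

lemma A1m_entries {X : Matrix (Fin 3) (Fin 3) F} (hX : X ∈ A1m F) :
    X 0 0 = 0 ∧ X 1 1 = 0 ∧ X 1 2 = 0 ∧ X 2 1 = 0 ∧ X 2 2 = 0 ∧
      X 2 0 = X 0 1 ∧ X 1 0 = -X 0 2 := by
  obtain ⟨⟨h1, h2, h3, h4, h5⟩, hosp⟩ := hX
  have e1 := congrFun (congrFun hosp 0) 1
  have e2 := congrFun (congrFun hosp 0) 2
  simp [osp] at e1 e2
  exact ⟨h1, h2, h3, h4, h5, e1, e2⟩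

/-- `z₁⁻ z₂⁻ z₃⁻ + z₂⁻ z₃⁻ z₁⁻ + z₃⁻ z₁⁻ z₂⁻` is a `*`-identity of `M_{1,2}(F)`. -/
theorem star_identity_cyclic_oddskew :
    ∀ c₁ ∈ A1m F, ∀ c₂ ∈ A1m F, ∀ c₃ ∈ A1m F,
      c₁ * c₂ * c₃ + c₂ * c₃ * c₁ + c₃ * c₁ * c₂ = 0 := by
  intro c₁ h₁ c₂ h₂ c₃ h₃
  obtain ⟨a1, b1, d1, e1, f1, g1, k1⟩ := A1m_entries F h₁
  obtain ⟨a2, b2, d2, e2, f2, g2, k2⟩ := A1m_entries F h₂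
  obtain ⟨a3, b3, d3, e3, f3, g3, k3⟩ := A1m_entries F h₃
  ext i j
  fin_cases i <;> fin_cases j <;>
    simp [Matrix.mul_apply, Fin.sum_univ_three, a1, b1, d1, e1, f1, g1, k1,
      a2, b2, d2, e2, f2, g2, k2, a3, b3, d3, e3, f3, g3, k3] <;> ring
end

section
/- The alternating polynomial z̃_1^+ y^- z̃_2^+ is a *-identity of M_{1,2}(F): for all b_1, b_2 ∈ A_1^+ and every a ∈ A_0^-, one has b_1·a·b_2 − b_2·a·b_1 = 0. -/
open Matrix

variable (F : Type*) [Field F] [CharZero F]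

lemma A1p_form (X : Matrix (Fin 3) (Fin 3) F) (h : X ∈ A1p F) :
    X = !![0, X 0 1, X 0 2; X 0 2, 0, 0; -X 0 1, 0, 0] := by
  obtain ⟨⟨h1, h2, h3, h4, h5⟩, hs⟩ := h
  have e1 := congrFun (congrFun hs 1) 0
  have e2 := congrFun (congrFun hs 2) 0
  simp [osp] at e1 e2
  ext i j
  fin_cases i <;> fin_cases j <;>
    simp_all [Matrix.vecHead, Matrix.vecTail]

lemma A0m_form (X : Matrix (Fin 3) (Fin 3) F) (h : X ∈ A0m F) :
    X = !![0, 0, 0; 0, X 1 1, X 1 2; 0, X 2 1, -X 1 1] := by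
  obtain ⟨⟨h1, h2, h3, h4⟩, hs⟩ := h
  have e0 := congrFun (congrFun hs 0) 0
  have e1 := congrFun (congrFun hs 2) 2
  simp [osp] at e0 e1
  have h00 : X 0 0 = 0 := by linear_combination e0 / 2
  ext i j
  fin_cases i <;> fin_cases j <;>
    simp_all [Matrix.vecHead, Matrix.vecTail] <;>
    linear_combination e1

/-- The alternating polynomial `z̃₁⁺ y⁻ z̃₂⁺` is a `*`-identity of `M_{1,2}(F)`. -/
theorem star_identity_alt_oddsym_skew_oddsym :
    ∀ b₁ ∈ A1p F, ∀ b₂ ∈ A1p F, ∀ a ∈ A0m F,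
      b₁ * a * b₂ - b₂ * a * b₁ = 0 := by
  intro b₁ hb₁ b₂ hb₂ a ha
  rw [A1p_form F b₁ hb₁, A1p_form F b₂ hb₂, A0m_form F a ha]
  ext i j
  fin_cases i <;> fin_cases j <;>
    simp [Matrix.mul_apply, Fin.sum_univ_three] <;> ring
end

section
/- The alternating polynomial z̃_1^- y^- z̃_2^- is a *-identity of M_{1,2}(F): for all c_1, c_2 ∈ A_1^- and every a ∈ A_0^-, one has c_1·a·c_2 − c_2·a·c_1 = 0. -/
open Matrix

variable (F : Type*) [Field F] [CharZero F]

/-- The alternating polynomial `z̃₁⁻ y⁻ z̃₂⁻` is a `*`-identity of `M_{1,2}(F)`. -/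
theorem star_identity_alt_oddskew_skew_oddskew :
    ∀ c₁ ∈ A1m F, ∀ c₂ ∈ A1m F, ∀ a ∈ A0m F,
      c₁ * a * c₂ - c₂ * a * c₁ = 0 := by
  intro c₁ hc₁ c₂ hc₂ a ha
  obtain ⟨⟨h1a, h1b, h1c, h1d, h1e⟩, hs1⟩ := hc₁
  obtain ⟨⟨h2a, h2b, h2c, h2d, h2e⟩, hs2⟩ := hc₂
  obtain ⟨⟨ha1, ha2, ha3, ha4⟩, hsa⟩ := ha
  have e1 : c₁ 0 2 = -(c₁ 1 0) := by
    have := congrFun (congrFun hs1 1) 0; simpa [osp] using this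
  have e2 : c₁ 0 1 = c₁ 2 0 := by
    have := congrFun (congrFun hs1 2) 0
    simpa [osp] using this
  have f1 : c₂ 0 2 = -(c₂ 1 0) := by
    have := congrFun (congrFun hs2 1) 0; simpa [osp] using this
  have f2 : c₂ 0 1 = c₂ 2 0 := by
    have := congrFun (congrFun hs2 2) 0
    simpa [osp] using this
  have g1 : a 0 0 = 0 := by
    have h : a 0 0 = -(a 0 0) := by
      have := congrFun (congrFun hsa 0) 0
      simpa [osp] using this
    linear_combination h / 2
  have g2 : a 2 2 = -(a 1 1) := by
    have := congrFun (congrFun hsa 1) 1; simpa [osp] using this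
  ext i j
  fin_cases i <;> fin_cases j <;>
    simp [Matrix.mul_apply, Fin.sum_univ_three, h1a, h1b, h1c, h1d, h1e,
      h2a, h2b, h2c, h2d, h2e, ha1, ha2, ha3, ha4, e1, e2, f1, f2, g1, g2] <;>
    ring
end

section
/- z_1^+ z_2^+ z^- − z_2^+ z^- z_1^+ + z^- z_1^+ z_2^+ is a *-identity of M_{1,2}(F): for all b_1, b_2 ∈ A_1^+ and every c ∈ A_1^-, one has b_1 b_2 c − b_2 c b_1 + c b_1 b_2 = 0. -/
open Matrix

variable (F : Type*) [Field F] [CharZero F]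

/-- `z₁⁺ z₂⁺ z⁻ − z₂⁺ z⁻ z₁⁺ + z⁻ z₁⁺ z₂⁺` is a `*`-identity of `M_{1,2}(F)`. -/
theorem star_identity_oddsym_oddsym_oddskew :
    ∀ b₁ ∈ A1p F, ∀ b₂ ∈ A1p F, ∀ c ∈ A1m F,
      b₁ * b₂ * c - b₂ * c * b₁ + c * b₁ * b₂ = 0 := by
  intro b₁ hb₁ b₂ hb₂ c hc
  obtain ⟨⟨e1, e2, e3, e4, e5⟩, hs⟩ := hb₁
  obtain ⟨⟨f1, f2, f3, f4, f5⟩, hs2⟩ := hb₂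
  obtain ⟨⟨g1, g2, g3, g4, g5⟩, hs3⟩ := hc
  have p1 := congr_fun (congr_fun hs 0 : _) 1
  have p2 := congr_fun (congr_fun hs 0 : _) 2
  have q1 := congr_fun (congr_fun hs2 0 : _) 1
  have q2 := congr_fun (congr_fun hs2 0 : _) 2
  have r1 := congr_fun (congr_fun hs3 0 : _) 1
  have r2 := congr_fun (congr_fun hs3 0 : _) 2
  simp only [osp, Matrix.neg_apply, Matrix.cons_val', Matrix.cons_val_zero, Matrix.cons_val_one,
    Matrix.head_cons, Matrix.empty_val', Matrix.cons_val_fin_one, Matrix.head_fin_const,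
    Matrix.of_apply, Matrix.cons_val_succ, Matrix.cons_val_two, Matrix.tail_cons]
    at p1 p2 q1 q2 r1 r2
  have p1' : b₁ 2 0 = -b₁ 0 1 := by linear_combination -p1
  have q1' : b₂ 2 0 = -b₂ 0 1 := by linear_combination -q1
  have r1' : c 2 0 = c 0 1 := by linear_combination -r1
  have r2' : c 1 0 = -c 0 2 := by linear_combination r2
  ext i j
  fin_cases i <;> fin_cases j <;>
    simp [Matrix.mul_apply, Fin.sum_univ_three, e1, e2, e3, e4, e5, f1, f2, f3, f4, f5,
      g1, g2, g3, g4, g5, p1', p2.symm, q1', q2.symm, r1', r2'] <;> ring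
end

section
/- z_1^- z_2^- z^+ − z_2^- z^+ z_1^- + z^+ z_1^- z_2^- is a *-identity of M_{1,2}(F): for all c_1, c_2 ∈ A_1^- and every b ∈ A_1^+, one has c_1 c_2 b − c_2 b c_1 + b c_1 c_2 = 0. -/
open Matrix

variable (F : Type*) [Field F] [CharZero F]

/-- `z₁⁻ z₂⁻ z⁺ − z₂⁻ z⁺ z₁⁻ + z⁺ z₁⁻ z₂⁻` is a `*`-identity of `M_{1,2}(F)`. -/
theorem star_identity_oddskew_oddskew_oddsym :
    ∀ c₁ ∈ A1m F, ∀ c₂ ∈ A1m F, ∀ b ∈ A1p F,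
      c₁ * c₂ * b - c₂ * b * c₁ + b * c₁ * c₂ = 0 := by
  rintro c₁ ⟨⟨h1, h2, h3, h4, h5⟩, e1⟩ c₂ ⟨⟨k1, k2, k3, k4, k5⟩, e2⟩ b ⟨⟨m1, m2, m3, m4, m5⟩, e3⟩
  have a1 : c₁ 2 0 = c₁ 0 1 := by
    have := congrFun (congrFun e1 0) 1; simp [osp] at this; linear_combination this
  have a2 : c₁ 1 0 = -c₁ 0 2 := by
    have := congrFun (congrFun e1 0) 2; simp [osp] at this; linear_combination this
  have b1 : c₂ 2 0 = c₂ 0 1 := by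
    have := congrFun (congrFun e2 0) 1; simp [osp] at this; linear_combination this
  have b2 : c₂ 1 0 = -c₂ 0 2 := by
    have := congrFun (congrFun e2 0) 2; simp [osp] at this; linear_combination this
  have d1 : b 2 0 = -b 0 1 := by
    have := congrFun (congrFun e3 0) 1; simp [osp] at this; linear_combination -this
  have d2 : b 1 0 = b 0 2 := by
    have := congrFun (congrFun e3 0) 2; simp [osp] at this; linear_combination this
  ext i j
  fin_cases i <;> fin_cases j <;>
    simp [Matrix.mul_apply, Fin.sum_univ_three, h1, h2, h3, h4, h5, k1, k2, k3, k4, k5,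
      m1, m2, m3, m4, m5, a1, a2, b1, b2, d1, d2] <;> ring
end

section
/- z^+ y^- z^- + z^- y^- z^+ is a *-identity of M_{1,2}(F): for every b ∈ A_1^+, every a ∈ A_0^- and every c ∈ A_1^-, one has b·a·c + c·a·b = 0. -/
open Matrix

variable (F : Type*) [Field F] [CharZero F]

/-- `z⁺ y⁻ z⁻ + z⁻ y⁻ z⁺` is a `*`-identity of `M_{1,2}(F)`. -/
theorem star_identity_mixed_odd_skew :
    ∀ b ∈ A1p F, ∀ a ∈ A0m F, ∀ c ∈ A1m F,
      b * a * c + c * a * b = 0 := by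
  intro b hb a ha c hc
  obtain ⟨⟨b00, b11, b12, b21, b22⟩, hbo⟩ := hb
  obtain ⟨⟨a01, a02, a10, a20⟩, hao⟩ := ha
  obtain ⟨⟨c00, c11, c12, c21, c22⟩, hco⟩ := hc
  have hb01 := congrFun (congrFun hbo 0) 1
  have hb02 := congrFun (congrFun hbo 0) 2
  have ha00 := congrFun (congrFun hao 0) 0
  have ha11 := congrFun (congrFun hao 1) 1
  have hc01 := congrFun (congrFun hco 0) 1
  have hc02 := congrFun (congrFun hco 0) 2
  simp [osp] at hb01 hb02 ha00 ha11 hc01 hc02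
  have hb20 : b 2 0 = -b 0 1 := by linear_combination -hb01
  have ha00' : a 0 0 = 0 := by linear_combination ha00 / 2
  ext i j
  fin_cases i <;> fin_cases j <;>
    simp [Matrix.mul_apply, Fin.sum_univ_succ, b00, b11, b12, b21, b22,
      a01, a02, a10, a20, c00, c11, c12, c21, c22,
      hb20, hb02, ha00', ha11, hc01, hc02] <;>
    ring
end

section
/- (z^+)^3 and (z^-)^3 are *-identities of M_{1,2}(F): for every b ∈ A_1^+ and every c ∈ A_1^-, one has b^3 = 0 and c^3 = 0. -/
open Matrix

variable (F : Type*) [Field F] [CharZero F]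

lemma cube_zero (X : Matrix (Fin 3) (Fin 3) F)
    (h00 : X 0 0 = 0) (h11 : X 1 1 = 0) (h12 : X 1 2 = 0)
    (h21 : X 2 1 = 0) (h22 : X 2 2 = 0)
    (hkey : X 0 1 * X 1 0 + X 0 2 * X 2 0 = 0) : X ^ 3 = 0 := by
  ext i j
  fin_cases i <;> fin_cases j <;>
    simp [pow_succ, Matrix.mul_apply, Fin.sum_univ_three, h00, h11, h12, h21, h22] <;>
    first
      | exact Or.inl hkey
      | linear_combination X 1 0 * hkey
      | linear_combination X 2 0 * hkey

/-- `(z⁺)³` and `(z⁻)³` are `*`-identities of `M_{1,2}(F)`. -/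
theorem star_identity_odd_cubes :
    ∀ b ∈ A1p F, ∀ c ∈ A1m F, b ^ 3 = 0 ∧ c ^ 3 = 0 := by
  intro b hb c hc
  obtain ⟨⟨hb00, hb11, hb12, hb21, hb22⟩, hbs⟩ := hb
  obtain ⟨⟨hc00, hc11, hc12, hc21, hc22⟩, hcs⟩ := hc
  have hb01 := congrFun (congrFun hbs 0) 1
  have hb02 := congrFun (congrFun hbs 0) 2
  have hc01 := congrFun (congrFun hcs 0) 1
  have hc02 := congrFun (congrFun hcs 0) 2
  simp [osp] at hb01 hb02 hc01 hc02
  constructor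
  · exact cube_zero F b hb00 hb11 hb12 hb21 hb22 (by linear_combination -(b 1 0) * hb01 - (b 2 0) * hb02)
  · exact cube_zero F c hc00 hc11 hc12 hc21 hc22 (by linear_combination -(c 1 0) * hc01 + (c 2 0) * hc02)
end

section
/- For every b ∈ A_1^+ and every z ∈ A_1 (arbitrary odd element), one has b^2 · z · b^2 = 0; likewise for every c ∈ A_1^- and every z ∈ A_1, one has c^2 · z · c^2 = 0. -/
open Matrix

variable (F : Type*) [Field F] [CharZero F]

/-- `b² z b² = 0` for `b` odd symmetric (resp. odd skew) and `z` any odd element. -/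
theorem star_identity_square_sandwich :
    (∀ b ∈ A1p F, ∀ z ∈ A1 F, b ^ 2 * z * b ^ 2 = 0) ∧
    (∀ c ∈ A1m F, ∀ z ∈ A1 F, c ^ 2 * z * c ^ 2 = 0) := by
  constructor
  · rintro b ⟨⟨h1, h2, h3, h4, h5⟩, hosp⟩ z ⟨z1, z2, z3, z4, z5⟩
    have e1 : -b 2 0 = b 0 1 := congrFun (congrFun hosp 0) 1
    have e2 : b 1 0 = b 0 2 := congrFun (congrFun hosp 0) 2
    ext i j
    fin_cases i <;> fin_cases j <;>
      simp [pow_two, Matrix.mul_apply, Fin.sum_univ_succ, h1, h2, h3, h4, h5,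
        z1, z2, z3, z4, z5, ← e1, e2]
    all_goals first
      | (right; ring1)
      | ring1
  · rintro b ⟨⟨h1, h2, h3, h4, h5⟩, hosp⟩ z ⟨z1, z2, z3, z4, z5⟩
    have e1 : -b 2 0 = -b 0 1 := congrFun (congrFun hosp 0) 1
    have e2 : b 1 0 = -b 0 2 := congrFun (congrFun hosp 0) 2
    have e1' : b 2 0 = b 0 1 := neg_injective e1
    ext i j
    fin_cases i <;> fin_cases j <;>
      simp [pow_two, Matrix.mul_apply, Fin.sum_univ_succ, h1, h2, h3, h4, h5,
        z1, z2, z3, z4, z5, e1', e2]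
    all_goals first
      | (right; ring1)
      | ring1
end

section
/- Every monomial in two odd symmetric variables whose degree in the first variable exceeds its degree in the second variable by at least 3 is a *-identity of M_{1,2}(F): for every finite word w = (w_1, …, w_n) with letters in {1, 2} such that (number of occurrences of 1 in w) − (number of occurrences of 2 in w) ≥ 3, and for all b_1, b_2 ∈ A_1^+, the product b_{w_1} · b_{w_2} · ⋯ · b_{w_n} equals 0. -/
open Matrix

variable (F : Type*) [Field F] [CharZero F]

/-! ### Auxiliary machinery -/

/-- The "symplectic form" of two odd symmetric elements. -/
def Dl (X Y : Matrix (Fin 3) (Fin 3) F) : F := X 0 1 * Y 0 2 - X 0 2 * Y 0 1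

/-- The "upper" part of an odd symmetric element. -/
def Um (X : Matrix (Fin 3) (Fin 3) F) : Matrix (Fin 3) (Fin 3) F :=
  !![0, X 0 1, X 0 2; 0, 0, 0; 0, 0, 0]

/-- The "lower" part of an odd symmetric element. -/
def Lm (X : Matrix (Fin 3) (Fin 3) F) : Matrix (Fin 3) (Fin 3) F :=
  !![0, 0, 0; X 0 2, 0, 0; -(X 0 1), 0, 0]

/-- The matrix unit `e₁₁`. -/
def E11 : Matrix (Fin 3) (Fin 3) F := !![1, 0, 0; 0, 0, 0; 0, 0, 0]

omit [CharZero F] in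
lemma UU (a c : Matrix (Fin 3) (Fin 3) F) : Um F a * Um F c = 0 := by
  ext i j; fin_cases i <;> fin_cases j <;>
    simp [Um, Matrix.mul_apply, Fin.sum_univ_three, Matrix.cons_val_two,
      Matrix.vecHead, Matrix.vecTail]

omit [CharZero F] in
lemma UL (a c : Matrix (Fin 3) (Fin 3) F) : Um F a * Lm F c = Dl F a c • E11 F := by
  ext i j; fin_cases i <;> fin_cases j <;>
    simp [Um, Lm, E11, Dl, Matrix.mul_apply, Fin.sum_univ_three, Matrix.cons_val_two,
      Matrix.vecHead, Matrix.vecTail] <;> ring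

omit [CharZero F] in
lemma LL (a c : Matrix (Fin 3) (Fin 3) F) : Lm F a * Lm F c = 0 := by
  ext i j; fin_cases i <;> fin_cases j <;>
    simp [Lm, Matrix.mul_apply, Fin.sum_univ_three, Matrix.cons_val_two,
      Matrix.vecHead, Matrix.vecTail]

omit [CharZero F] in
lemma UE11 (a : Matrix (Fin 3) (Fin 3) F) : Um F a * E11 F = 0 := by
  ext i j; fin_cases i <;> fin_cases j <;>
    simp [Um, E11, Matrix.mul_apply, Fin.sum_univ_three, Matrix.cons_val_two,
      Matrix.vecHead, Matrix.vecTail]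

omit [CharZero F] in
lemma LE11 (a : Matrix (Fin 3) (Fin 3) F) : Lm F a * E11 F = Lm F a := by
  ext i j; fin_cases i <;> fin_cases j <;>
    simp [Lm, E11, Matrix.mul_apply, Fin.sum_univ_three, Matrix.cons_val_two,
      Matrix.vecHead, Matrix.vecTail]

omit [CharZero F] in
lemma E11U (c : Matrix (Fin 3) (Fin 3) F) : E11 F * Um F c = Um F c := by
  ext i j; fin_cases i <;> fin_cases j <;>
    simp [Um, E11, Matrix.mul_apply, Fin.sum_univ_three, Matrix.cons_val_two,
      Matrix.vecHead, Matrix.vecTail]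

omit [CharZero F] in
lemma Dl_self (a : Matrix (Fin 3) (Fin 3) F) : Dl F a a = 0 := by
  simp [Dl, mul_comm]

omit [CharZero F] in
lemma A1p_decomp {x : Matrix (Fin 3) (Fin 3) F} (hx : x ∈ A1p F) :
    x = Um F x + Lm F x := by
  obtain ⟨⟨h1, h2, h3, h4, h5⟩, hs⟩ := hx
  have e1 : x 0 2 = x 1 0 := by
    have := congrFun (congrFun hs 1) 0
    simpa [osp, Matrix.cons_val_two, Matrix.vecHead, Matrix.vecTail] using this
  have e2 : -(x 0 1) = x 2 0 := by
    have := congrFun (congrFun hs 2) 0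
    simpa [osp, Matrix.cons_val_two, Matrix.vecHead, Matrix.vecTail] using this
  ext i j; fin_cases i <;> fin_cases j <;>
    simp [Um, Lm, h1, h2, h3, h4, h5, e1, e2, Matrix.cons_val_two,
      Matrix.vecHead, Matrix.vecTail]

omit [CharZero F] in
lemma mul_Um {x : Matrix (Fin 3) (Fin 3) F} (hx : x ∈ A1p F)
    (z : Matrix (Fin 3) (Fin 3) F) : x * Um F z = Lm F x * Um F z := by
  conv_lhs => rw [A1p_decomp F hx]
  rw [add_mul, UU, zero_add]

omit [CharZero F] in
lemma mul_Lm {x : Matrix (Fin 3) (Fin 3) F} (hx : x ∈ A1p F)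
    (y : Matrix (Fin 3) (Fin 3) F) : x * Lm F y = Dl F x y • E11 F := by
  conv_lhs => rw [A1p_decomp F hx]
  rw [add_mul, UL, LL, add_zero]

omit [CharZero F] in
lemma mul_E11 {x : Matrix (Fin 3) (Fin 3) F} (hx : x ∈ A1p F) :
    x * E11 F = Lm F x := by
  conv_lhs => rw [A1p_decomp F hx]
  rw [add_mul, UE11, LE11, zero_add]

omit [CharZero F] in
lemma mul_LU {x : Matrix (Fin 3) (Fin 3) F} (hx : x ∈ A1p F)
    (y z : Matrix (Fin 3) (Fin 3) F) :
    x * (Lm F y * Um F z) = Dl F x y • Um F z := by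
  rw [← mul_assoc, mul_Lm F hx, smul_mul_assoc, E11U]

/-- The coefficient of a word of odd symmetric elements. -/
def Af : List (Matrix (Fin 3) (Fin 3) F) → F
  | [] => 1
  | [_] => 1
  | x :: y :: t => Dl F x y * Af t

omit [CharZero F] in
/-- Structure of a product of odd symmetric elements. -/
lemma prodForm : ∀ (t : List (Matrix (Fin 3) (Fin 3) F)) (x : Matrix (Fin 3) (Fin 3) F),
    x ∈ A1p F → (∀ X ∈ t, X ∈ A1p F) →
    (x :: t).prod =
      if Even t.length then
        Af F (x :: t) • Um F ((x :: t).getLast (by simp)) + Af F t • Lm F x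
      else
        Af F (x :: t) • E11 F +
          Af F t • (Lm F x * Um F ((x :: t).getLast (by simp)))
  | [], x, hx, _ => by
      simpa [Af] using A1p_decomp F hx
  | y :: s, x, hx, ht => by
      have hy : y ∈ A1p F := ht y (by simp)
      have hs : ∀ X ∈ s, X ∈ A1p F := fun X h => ht X (by simp [h])
      have IH := prodForm s y hy hs
      have hlast : ((x :: y :: s).getLast (by simp)) = ((y :: s).getLast (by simp)) :=
        List.getLast_cons (by simp)
      rw [List.prod_cons, IH]
      by_cases h : Even s.length
      · have h' : ¬ Even (y :: s).length := by
          simpa [List.length_cons, Nat.even_add_one] using h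
        rw [if_pos h, if_neg h', hlast]
        rw [mul_add, mul_smul_comm, mul_smul_comm, mul_Um F hx, mul_Lm F hx]
        show Af F (y :: s) • (Lm F x * Um F _) + Af F s • Dl F x y • E11 F = _
        rw [smul_smul, Af]
        rw [mul_comm (Dl F x y) (Af F s), mul_comm (Af F s) (Dl F x y)]
        abel
      · have h' : Even (y :: s).length := by
          simpa [List.length_cons, Nat.even_add_one] using h
        rw [if_neg h, if_pos h', hlast]
        rw [mul_add, mul_smul_comm, mul_smul_comm, mul_E11 F hx, mul_LU F hx]
        show Af F (y :: s) • Lm F x + Af F s • Dl F x y • Um F _ = _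
        rw [smul_smul, Af, mul_comm (Af F s) (Dl F x y)]
        abel

omit [CharZero F] in
/-- If the word has at least two more `0`s than `1`s, the coefficient vanishes. -/
lemma Af_eq_zero (b : Fin 2 → Matrix (Fin 3) (Fin 3) F) :
    ∀ w : List (Fin 2), (w.count 0 : ℤ) - (w.count 1 : ℤ) ≥ 2 →
      Af F (w.map b) = 0
  | [], h => by simp at h
  | [x], h => by
      exfalso; fin_cases x <;> simp [List.count_cons] at h
  | x :: y :: t, h => by
      rw [List.map_cons, List.map_cons, Af]
      rcases eq_or_ne x y with rfl | hne
      · rw [Dl_self, zero_mul]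
      · have ht : ((t.count 0 : ℤ) - (t.count 1 : ℤ)) ≥ 2 := by
          fin_cases x <;> fin_cases y <;>
            simp_all [List.count_cons] <;> push_cast at h ⊢ <;> omega
        rw [Af_eq_zero b t ht, mul_zero]

/-- Any monomial in two odd symmetric variables whose degree in the first
variable exceeds its degree in the second by at least `3` is a `*`-identity
of `M_{1,2}(F)`.  Letters `0` and `1` of the word stand for `z₁⁺` and `z₂⁺`. -/
theorem star_identity_unbalanced_oddsym_word :
    ∀ w : List (Fin 2), (w.count 0 : ℤ) - (w.count 1 : ℤ) ≥ 3 →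
      ∀ b : Fin 2 → Matrix (Fin 3) (Fin 3) F, (∀ i, b i ∈ A1p F) →
        (w.map b).prod = 0 := by
  intro w hw b hb
  match w with
  | [] => simp at hw
  | x :: t =>
    rw [List.map_cons]
    rw [prodForm F (t.map b) (b x) (hb x)
      (by intro X hX; obtain ⟨i, _, rfl⟩ := List.mem_map.1 hX; exact hb i)]
    have h1 : Af F (b x :: t.map b) = 0 := by
      have := Af_eq_zero F b (x :: t) (by omega)
      rwa [List.map_cons] at this
    have h2 : Af F (t.map b) = 0 := by
      refine Af_eq_zero F b t ?_
      fin_cases x <;> simp [List.count_cons] at hw <;> push_cast at hw ⊢ <;> omega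
    rw [h1, h2, zero_smul, zero_smul, zero_smul, zero_smul]
    split_ifs <;> simp
end

section
/- Every monomial in even symmetric variables and two odd symmetric variables z_1^+, z_2^+ whose degree in z_1^+ exceeds its degree in z_2^+ by at least 3 is a *-identity of M_{1,2}(F): for every n, every labelling function g : {1,…,n} → {0, 1, 2} with (#{i : g(i) = 1}) − (#{i : g(i) = 2}) ≥ 3, every function f : {1,…,n} → M_3(F) such that f(i) ∈ A_0^+ whenever g(i) = 0, f(i) = b_1 whenever g(i) = 1, and f(i) = b_2 whenever g(i) = 2, for some fixed b_1, b_2 ∈ A_1^+, the product f(1)·f(2)·⋯·f(n) equals 0. -/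
open Matrix

variable (F : Type*) [Field F] [CharZero F]

/- ### Auxiliary machinery -/

def diag3 (a e : F) : Matrix (Fin 3) (Fin 3) F := !![a,0,0; 0,e,0; 0,0,e]
def Bm (v : F × F) : Matrix (Fin 3) (Fin 3) F := !![0, v.1, v.2; v.2, 0, 0; -v.1, 0, 0]
def Podd (A B : F) (u w : F × F) : Matrix (Fin 3) (Fin 3) F :=
  !![0, A*w.1, A*w.2; B*u.2, 0, 0; -(B*u.1), 0, 0]
def Peven (A B : F) (u w : F × F) : Matrix (Fin 3) (Fin 3) F :=
  !![A, 0, 0; 0, B*(u.2*w.1), B*(u.2*w.2); 0, -(B*(u.1*w.1)), -(B*(u.1*w.2))]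
def om (u v : F × F) : F := u.1*v.2 - u.2*v.1

lemma diag3_one : diag3 F 1 1 = 1 := by
  ext i j; fin_cases i <;> fin_cases j <;>
    simp [diag3, Matrix.one_apply, Matrix.vecHead, Matrix.vecTail]

lemma mul_dd (a e a' e' : F) : diag3 F a e * diag3 F a' e' = diag3 F (a*a') (e*e') := by
  ext i j; fin_cases i <;> fin_cases j <;>
    simp [diag3, Matrix.mul_apply, Fin.sum_univ_three, Matrix.vecHead, Matrix.vecTail]

lemma mul_db (a e : F) (v : F × F) : diag3 F a e * Bm F v = Podd F a e v v := by
  ext i j; fin_cases i <;> fin_cases j <;>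
    simp [diag3, Bm, Podd, Matrix.mul_apply, Fin.sum_univ_three, Matrix.vecHead,
      Matrix.vecTail, mul_comm]

lemma mul_od (A B a e : F) (u w : F × F) :
    Podd F A B u w * diag3 F a e = Podd F (A*e) (B*a) u w := by
  ext i j; fin_cases i <;> fin_cases j <;>
    simp [diag3, Podd, Matrix.mul_apply, Fin.sum_univ_three, Matrix.vecHead,
      Matrix.vecTail] <;> ring

lemma mul_ob (A B : F) (u w v : F × F) :
    Podd F A B u w * Bm F v = Peven F (A * om F w v) B u v := by
  ext i j; fin_cases i <;> fin_cases j <;>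
    simp [Bm, Podd, Peven, om, Matrix.mul_apply, Fin.sum_univ_three, Matrix.vecHead,
      Matrix.vecTail] <;> ring

lemma mul_ed (A B a e : F) (u w : F × F) :
    Peven F A B u w * diag3 F a e = Peven F (A*a) (B*e) u w := by
  ext i j; fin_cases i <;> fin_cases j <;>
    simp [diag3, Peven, Matrix.mul_apply, Fin.sum_univ_three, Matrix.vecHead,
      Matrix.vecTail] <;> ring

lemma mul_eb (A B : F) (u w v : F × F) :
    Peven F A B u w * Bm F v = Podd F A (B * om F w v) u v := by
  ext i j; fin_cases i <;> fin_cases j <;>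
    simp [Bm, Podd, Peven, om, Matrix.mul_apply, Fin.sum_univ_three, Matrix.vecHead,
      Matrix.vecTail] <;> ring

lemma om_self (v : F × F) : om F v v = 0 := by simp [om, mul_comm]

lemma podd_zero (u w : F × F) : Podd F 0 0 u w = 0 := by
  ext i j; fin_cases i <;> fin_cases j <;> simp [Podd, Matrix.vecHead, Matrix.vecTail]

lemma peven_zero (u w : F × F) : Peven F 0 0 u w = 0 := by
  ext i j; fin_cases i <;> fin_cases j <;> simp [Peven, Matrix.vecHead, Matrix.vecTail]

lemma A0p_char {X : Matrix (Fin 3) (Fin 3) F} (h : X ∈ A0p F) :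
    ∃ a e, X = diag3 F a e := by
  obtain ⟨⟨h1, h2, h3, h4⟩, hs⟩ := h
  refine ⟨X 0 0, X 1 1, ?_⟩
  have e01 := congrFun (congrFun hs 0) 1
  have e02 := congrFun (congrFun hs 0) 2
  have e12 := congrFun (congrFun hs 1) 2
  have e21 := congrFun (congrFun hs 2) 1
  have e11 := congrFun (congrFun hs 1) 1
  simp [osp, Matrix.vecHead, Matrix.vecTail] at e01 e02 e12 e21 e11
  ext i j
  fin_cases i <;> fin_cases j <;>
    simp_all [diag3, Matrix.vecHead, Matrix.vecTail] <;>
    first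
      | linear_combination (-(1/2) : F) * e12
      | linear_combination (-(1/2) : F) * e21

lemma A1p_char {X : Matrix (Fin 3) (Fin 3) F} (h : X ∈ A1p F) :
    ∃ v, X = Bm F v := by
  obtain ⟨⟨h1, h2, h3, h4, h5⟩, hs⟩ := h
  refine ⟨(X 0 1, X 0 2), ?_⟩
  have e01 := congrFun (congrFun hs 0) 1
  have e02 := congrFun (congrFun hs 0) 2
  simp [osp, Matrix.vecHead, Matrix.vecTail] at e01 e02
  ext i j
  fin_cases i <;> fin_cases j <;>
    simp_all [Bm, Matrix.vecHead, Matrix.vecTail] <;> linear_combination -e01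

def Vv (v₁ v₂ : F × F) : Fin 3 → F × F := ![(0,0), v₁, v₂]

def chi (x : Fin 3) : ℤ := if x = 1 then 1 else -1

def dcount (c : List (Fin 3)) : ℤ := (c.count 1 : ℤ) - (c.count 2 : ℤ)

lemma fin3_cases (x : Fin 3) : x = 0 ∨ x = 1 ∨ x = 2 := by
  revert x; decide

lemma dcount_append0 (c : List (Fin 3)) : dcount (c ++ [0]) = dcount c := by
  simp [dcount, List.count_append]

lemma dcount_append12 {x : Fin 3} (hx : x = 1 ∨ x = 2) (c : List (Fin 3)) :
    dcount (c ++ [x]) = dcount c + chi x := by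
  rcases hx with h|h <;> subst h <;> simp [dcount, chi, List.count_append] <;> ring

lemma chi_cancel {c x : Fin 3} (hc : c = 1 ∨ c = 2) (hx : x = 1 ∨ x = 2) (h : c ≠ x) :
    chi c + chi x = 0 := by
  rcases hc with h1|h1 <;> rcases hx with h2|h2 <;> subst h1 <;> subst h2 <;>
    simp_all [chi]

lemma key (v₁ v₂ : F × F) (l : List (Fin 3 × Matrix (Fin 3) (Fin 3) F))
    (hmem : ∀ p ∈ l, (p.1 = 0 → ∃ a e, p.2 = diag3 F a e) ∧
        (p.1 = 1 → p.2 = Bm F v₁) ∧ (p.1 = 2 → p.2 = Bm F v₂)) :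
    ((∃ a e, (l.map Prod.snd).prod = diag3 F a e) ∧ dcount (l.map Prod.fst) = 0)
    ∨ (∃ A B cu cw, (cu = 1 ∨ cu = 2) ∧ (cw = 1 ∨ cw = 2) ∧
        (l.map Prod.snd).prod = Podd F A B (Vv F v₁ v₂ cu) (Vv F v₁ v₂ cw) ∧
        (A ≠ 0 → dcount (l.map Prod.fst) = chi cw) ∧
        (B ≠ 0 → dcount (l.map Prod.fst) = chi cu))
    ∨ (∃ A B cu cw, (cu = 1 ∨ cu = 2) ∧ (cw = 1 ∨ cw = 2) ∧
        (l.map Prod.snd).prod = Peven F A B (Vv F v₁ v₂ cu) (Vv F v₁ v₂ cw) ∧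
        (A ≠ 0 → dcount (l.map Prod.fst) = 0) ∧
        (B ≠ 0 → dcount (l.map Prod.fst) = chi cu + chi cw)) := by
  induction l using List.reverseRecOn with
  | nil =>
      exact Or.inl ⟨⟨1, 1, by simp [diag3_one]⟩, by simp [dcount]⟩
  | append_singleton l p ih =>
      have ihh := ih (fun q hq => hmem q (by simp [hq]))
      have hp := hmem p (by simp)
      have hmapf : (l ++ [p]).map Prod.fst = l.map Prod.fst ++ [p.1] := by simp
      have hmaps : ((l ++ [p]).map Prod.snd).prod = (l.map Prod.snd).prod * p.2 := by
        simp
      rcases fin3_cases p.1 with hx | hx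
      · -- even symmetric letter
        obtain ⟨a, e, hpe⟩ := hp.1 hx
        have hdc : dcount ((l ++ [p]).map Prod.fst) = dcount (l.map Prod.fst) := by
          rw [hmapf, hx, dcount_append0]
        rcases ihh with ⟨⟨a', e', hP⟩, hd⟩ | ⟨A, B, cu, cw, hcu, hcw, hP, hA, hB⟩ |
            ⟨A, B, cu, cw, hcu, hcw, hP, hA, hB⟩
        · exact Or.inl ⟨⟨a' * a, e' * e, by rw [hmaps, hP, hpe, mul_dd]⟩, by rw [hdc]; exact hd⟩
        · exact Or.inr (Or.inl ⟨A * e, B * a, cu, cw, hcu, hcw,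
            by rw [hmaps, hP, hpe, mul_od],
            fun h => by rw [hdc]; exact hA (left_ne_zero_of_mul h),
            fun h => by rw [hdc]; exact hB (left_ne_zero_of_mul h)⟩)
        · exact Or.inr (Or.inr ⟨A * a, B * e, cu, cw, hcu, hcw,
            by rw [hmaps, hP, hpe, mul_ed],
            fun h => by rw [hdc]; exact hA (left_ne_zero_of_mul h),
            fun h => by rw [hdc]; exact hB (left_ne_zero_of_mul h)⟩)
      · -- odd symmetric letter, p.1 = 1 or 2
        have hpe : p.2 = Bm F (Vv F v₁ v₂ p.1) := by
          rcases hx with h|h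
          · rw [hp.2.1 h, h]; rfl
          · rw [hp.2.2 h, h]; rfl
        have hdc : dcount ((l ++ [p]).map Prod.fst)
            = dcount (l.map Prod.fst) + chi p.1 := by
          rw [hmapf, dcount_append12 hx]
        rcases ihh with ⟨⟨a', e', hP⟩, hd⟩ | ⟨A, B, cu, cw, hcu, hcw, hP, hA, hB⟩ |
            ⟨A, B, cu, cw, hcu, hcw, hP, hA, hB⟩
        · -- scalar → odd
          refine Or.inr (Or.inl ⟨a', e', p.1, p.1, hx, hx,
            by rw [hmaps, hP, hpe, mul_db], ?_, ?_⟩) <;>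
            intro _ <;> rw [hdc, hd, zero_add]
        · -- odd → even
          refine Or.inr (Or.inr ⟨A * om F (Vv F v₁ v₂ cw) (Vv F v₁ v₂ p.1), B, cu, p.1,
            hcu, hx, by rw [hmaps, hP, hpe, mul_ob], ?_, ?_⟩)
          · intro h
            have hA0 : A ≠ 0 := left_ne_zero_of_mul h
            have hom : om F (Vv F v₁ v₂ cw) (Vv F v₁ v₂ p.1) ≠ 0 := right_ne_zero_of_mul h
            have hne : cw ≠ p.1 := by
              intro hEq; rw [hEq] at hom; exact hom (om_self F _)
            rw [hdc, hA hA0, chi_cancel hcw hx hne]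
          · intro h
            rw [hdc, hB h]
        · -- even → odd
          refine Or.inr (Or.inl ⟨A, B * om F (Vv F v₁ v₂ cw) (Vv F v₁ v₂ p.1), cu, p.1,
            hcu, hx, by rw [hmaps, hP, hpe, mul_eb], ?_, ?_⟩)
          · intro h
            rw [hdc, hA h, zero_add]
          · intro h
            have hB0 : B ≠ 0 := left_ne_zero_of_mul h
            have hom : om F (Vv F v₁ v₂ cw) (Vv F v₁ v₂ p.1) ≠ 0 := right_ne_zero_of_mul h
            have hne : cw ≠ p.1 := by
              intro hEq; rw [hEq] at hom; exact hom (om_self F _)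
            rw [hdc, hB hB0, add_assoc, chi_cancel hcw hx hne, add_zero]

/-- Any monomial in even symmetric variables and two odd symmetric variables
`z₁⁺, z₂⁺` whose degree in `z₁⁺` exceeds its degree in `z₂⁺` by at least `3`
is a `*`-identity of `M_{1,2}(F)`.  The label `0` marks an even symmetric
variable, and labels `1`, `2` mark the variables `z₁⁺`, `z₂⁺`. -/
theorem star_identity_unbalanced_mixed_word :
    ∀ (n : ℕ) (g : Fin n → Fin 3) (f : Fin n → Matrix (Fin 3) (Fin 3) F)
      (b₁ b₂ : Matrix (Fin 3) (Fin 3) F),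
      b₁ ∈ A1p F → b₂ ∈ A1p F →
      ((List.ofFn g).count 1 : ℤ) - ((List.ofFn g).count 2 : ℤ) ≥ 3 →
      (∀ i, g i = 0 → f i ∈ A0p F) →
      (∀ i, g i = 1 → f i = b₁) →
      (∀ i, g i = 2 → f i = b₂) →
      (List.ofFn f).prod = 0 := by
  intro n g f b₁ b₂ hb1 hb2 hge hf0 hf1 hf2
  obtain ⟨v₁, rfl⟩ := A1p_char F hb1
  obtain ⟨v₂, rfl⟩ := A1p_char F hb2
  set l : List (Fin 3 × Matrix (Fin 3) (Fin 3) F) := List.ofFn (fun i => (g i, f i)) with hl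
  have hmap2 : l.map Prod.snd = List.ofFn f := by rw [hl, List.map_ofFn]; rfl
  have hmap1 : l.map Prod.fst = List.ofFn g := by rw [hl, List.map_ofFn]; rfl
  have hd : dcount (l.map Prod.fst) ≥ 3 := by
    rw [hmap1]; exact hge
  have hmem : ∀ p ∈ l, (p.1 = 0 → ∃ a e, p.2 = diag3 F a e) ∧
      (p.1 = 1 → p.2 = Bm F v₁) ∧ (p.1 = 2 → p.2 = Bm F v₂) := by
    intro p hp
    rw [hl, List.mem_ofFn] at hp
    obtain ⟨i, rfl⟩ := hp
    exact ⟨fun h => A0p_char F (hf0 i h), fun h => hf1 i h, fun h => hf2 i h⟩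
  have hchi : ∀ x : Fin 3, chi x = 1 ∨ chi x = -1 := by
    intro x; unfold chi; split <;> simp
  rcases key F v₁ v₂ l hmem with ⟨_, h0⟩ | ⟨A, B, cu, cw, hcu, hcw, hP, hA, hB⟩ |
      ⟨A, B, cu, cw, hcu, hcw, hP, hA, hB⟩
  · omega
  · have hA0 : A = 0 := by
      by_contra h
      have := hA h
      rcases hchi cw with h1|h1 <;> omega
    have hB0 : B = 0 := by
      by_contra h
      have := hB h
      rcases hchi cu with h1|h1 <;> omega
    rw [← hmap2, hP, hA0, hB0, podd_zero]
  · have hA0 : A = 0 := by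
      by_contra h
      have := hA h
      omega
    have hB0 : B = 0 := by
      by_contra h
      have := hB h
      rcases hchi cu with h1|h1 <;> rcases hchi cw with h2|h2 <;> omega
    rw [← hmap2, hP, hA0, hB0, peven_zero]
end
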